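/- arXiv:1409.4613 — 2 statements merged into one kernel-verified Lean document; each statement's English description precedes it below -/
import Mathlib

section
/- (Monotonicity of r↓.) If (u₁,v₁) and (u₂,v₂) are both reachable from the bottom, u₁ ≤ u₂, and v₁ ≥ v₂, then r↓(u₁,v₁) ≤ r↓(u₂,v₂). -/
open Set

/-- A monotonic path in a free space `S`: a connected subset of `S` such that
`(u - u')*(v - v') ≥ 0` for any two of its points. -/
def MonotonicPath (S γ : Set (ℝ × ℝ)) : Prop :=
  γ ⊆ S ∧ IsConnected γ ∧ ∀ p ∈ γ, ∀ q ∈ γ, (p.1 - q.1) * (p.2 - q.2) ≥ 0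

/-- Two points are mutually reachable if some monotonic path contains both. -/
def MutuallyReachable (S : Set (ℝ × ℝ)) (p q : ℝ × ℝ) : Prop :=
  ∃ γ : Set (ℝ × ℝ), MonotonicPath S γ ∧ p ∈ γ ∧ q ∈ γ

/-!
If `r↓` decreased, the two witnessing paths, cut down to the stretch between each point and its
bottom endpoint, would cross at some `q`; following the second path from `(u₂, v₂)` to `q` and
then the first one from `q` to `(r↓(u₁, v₁), 0)` gives a monotonic path reaching further right
than `r↓(u₂, v₂)`. The stretch of a monotonic path between two of its points `a ≤ b` is again
connected, because the clamp `p ↦ (p ⊔ a) ⊓ b` is a continuous retraction of the path onto it.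
-/

lemma sub_mul_sub_nonneg_iff_le_or_ge {p q : ℝ × ℝ} :
    0 ≤ (p.1 - q.1) * (p.2 - q.2) ↔ p ≤ q ∨ q ≤ p := by
  simp only [mul_nonneg_iff, sub_nonneg, sub_nonpos, Prod.le_def]
  tauto

namespace MonotonicPath

variable {S γ δ : Set (ℝ × ℝ)} {a b p q : ℝ × ℝ}

lemma le_or_ge (h : MonotonicPath S γ) (hp : p ∈ γ) (hq : q ∈ γ) : p ≤ q ∨ q ≤ p :=
  sub_mul_sub_nonneg_iff_le_or_ge.1 (h.2.2 p hp q hq)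

lemma inter_Icc (h : MonotonicPath S γ) (ha : a ∈ γ) (hb : b ∈ γ) (hab : a ≤ b) :
    MonotonicPath S (γ ∩ Icc a b) := by
  have hclamp : (fun p => (p ⊔ a) ⊓ b) '' γ = γ ∩ Icc a b := by
    ext p
    constructor
    · rintro ⟨r, hr, rfl⟩
      dsimp only
      refine ⟨?_, le_inf le_sup_right hab, inf_le_right⟩
      rcases h.le_or_ge hr ha with hra | har
      · rwa [sup_eq_right.2 hra, inf_eq_left.2 hab]
      rcases h.le_or_ge hr hb with hrb | hbr
      · rwa [sup_eq_left.2 har, inf_eq_left.2 hrb]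
      · rwa [sup_eq_left.2 har, inf_eq_right.2 hbr]
    · rintro ⟨hp, hap, hpb⟩
      exact ⟨p, hp, by simp only [sup_eq_left.2 hap, inf_eq_left.2 hpb]⟩
  have hcont : Continuous fun p : ℝ × ℝ => (p ⊔ a) ⊓ b :=
    ((continuous_fst.sup continuous_const).inf continuous_const).prodMk
      ((continuous_snd.sup continuous_const).inf continuous_const)
  exact ⟨inter_subset_left.trans h.1, hclamp ▸ h.2.1.image _ hcont.continuousOn,
    fun p hp r hr => h.2.2 p hp.1 r hr.1⟩

lemma inter_uIcc (h : MonotonicPath S γ) (ha : a ∈ γ) (hb : b ∈ γ) :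
    MonotonicPath S (γ ∩ uIcc a b) := by
  rcases h.le_or_ge ha hb with hab | hba
  · rw [uIcc_of_le hab]
    exact h.inter_Icc ha hb hab
  · rw [uIcc_of_ge hba]
    exact h.inter_Icc hb ha hba

lemma union_of_le (hγ : MonotonicPath S γ) (hδ : MonotonicPath S δ) (hqγ : q ∈ γ) (hqδ : q ∈ δ)
    (hγq : ∀ p ∈ γ, p ≤ q) (hδq : ∀ p ∈ δ, q ≤ p) : MonotonicPath S (γ ∪ δ) := by
  refine ⟨union_subset hγ.1 hδ.1, IsConnected.union ⟨q, hqγ, hqδ⟩ hγ.2.1 hδ.2.1, ?_⟩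
  rintro p (hp | hp) r (hr | hr)
  · exact hγ.2.2 p hp r hr
  · exact sub_mul_sub_nonneg_iff_le_or_ge.2 (.inl ((hγq p hp).trans (hδq r hr)))
  · exact sub_mul_sub_nonneg_iff_le_or_ge.2 (.inr ((hγq r hr).trans (hδq p hp)))
  · exact hδ.2.2 p hp r hr

end MonotonicPath

namespace MutuallyReachable

variable {S : Set (ℝ × ℝ)} {p q r : ℝ × ℝ}

lemma symm (h : MutuallyReachable S p q) : MutuallyReachable S q p :=
  let ⟨γ, hγ, hp, hq⟩ := h
  ⟨γ, hγ, hq, hp⟩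

lemma trans_of_le (hpq : MutuallyReachable S p q) (hqr : MutuallyReachable S q r)
    (hpq' : p ≤ q) (hqr' : q ≤ r) : MutuallyReachable S p r := by
  obtain ⟨γ, hγ, hpγ, hqγ⟩ := hpq
  obtain ⟨δ, hδ, hqδ, hrδ⟩ := hqr
  exact ⟨γ ∩ Icc p q ∪ δ ∩ Icc q r,
    (hγ.inter_Icc hpγ hqγ hpq').union_of_le (hδ.inter_Icc hqδ hrδ hqr')
      ⟨hqγ, hpq', le_rfl⟩ ⟨hqδ, le_rfl, hqr'⟩ (fun _ hx => hx.2.2) (fun _ hx => hx.2.1),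
    .inl ⟨hpγ, le_rfl, hpq'⟩, .inr ⟨hrδ, hqr', le_rfl⟩⟩

end MutuallyReachable

theorem rDown_monotone_general (m n : ℝ)
    (Dε : Set (ℝ × ℝ)) (hD : Dε ⊆ Icc ((0 : ℝ), (0 : ℝ)) (2 * m, n))
    (rDown : ℝ × ℝ → ℝ)
    (hspec : ∀ p : ℝ × ℝ, (∃ u : ℝ, MutuallyReachable Dε p (u, 0)) →
      MutuallyReachable Dε p (rDown p, 0) ∧
        ∀ u : ℝ, MutuallyReachable Dε p (u, 0) → u ≤ rDown p)
    (hcross : ∀ γ₁ γ₂ : Set (ℝ × ℝ), MonotonicPath Dε γ₁ → MonotonicPath Dε γ₂ →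
      ∀ p₁ ∈ γ₁, ∀ p₂ ∈ γ₂, ∀ x₁ x₂ : ℝ, (x₁, (0 : ℝ)) ∈ γ₁ → (x₂, (0 : ℝ)) ∈ γ₂ →
        p₁.1 ≤ p₂.1 → p₂.2 ≤ p₁.2 → x₂ ≤ x₁ → (γ₁ ∩ γ₂).Nonempty)
    (u₁ v₁ u₂ v₂ : ℝ)
    (h1 : ∃ u : ℝ, MutuallyReachable Dε (u₁, v₁) (u, 0))
    (h2 : ∃ u : ℝ, MutuallyReachable Dε (u₂, v₂) (u, 0))
    (hu : u₁ ≤ u₂) (hv : v₂ ≤ v₁) :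
    rDown (u₁, v₁) ≤ rDown (u₂, v₂) := by
  by_contra! hlt
  obtain ⟨γ₁, hγ₁, hp₁, hb₁⟩ := (hspec _ h1).1
  obtain ⟨γ₂, hγ₂, hp₂, hb₂⟩ := (hspec _ h2).1
  obtain ⟨q, hq₁, hq₂⟩ := hcross _ _ (hγ₁.inter_uIcc hp₁ hb₁) (hγ₂.inter_uIcc hp₂ hb₂)
    _ ⟨hp₁, left_mem_uIcc⟩ _ ⟨hp₂, left_mem_uIcc⟩ _ _ ⟨hb₁, right_mem_uIcc⟩
    ⟨hb₂, right_mem_uIcc⟩ hu hv hlt.le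
  have hp₂q : MutuallyReachable Dε (u₂, v₂) q := ⟨γ₂, hγ₂, hp₂, hq₂.1⟩
  have hqb₁ : MutuallyReachable Dε q (rDown (u₁, v₁), 0) := ⟨γ₁, hγ₁, hq₁.1, hb₁⟩
  suffices MutuallyReachable Dε (u₂, v₂) (rDown (u₁, v₁), 0) from
    ((hspec _ h2).2 _ this).not_gt hlt
  rcases hγ₁.le_or_ge hb₁ hp₁ with hbp₁ | hpb₁
  · rw [uIcc_of_ge hbp₁] at hq₁
    rcases hγ₂.le_or_ge hb₂ hp₂ with hbp₂ | hpb₂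
    · rw [uIcc_of_ge hbp₂] at hq₂
      exact (hqb₁.symm.trans_of_le hp₂q.symm hq₁.2.1 hq₂.2.2).symm
    · rw [uIcc_of_le hpb₂] at hq₂
      exact absurd (hq₁.2.1.1.trans hq₂.2.2.1) hlt.not_ge
  · -- `(u₁, v₁)` lies on the bottom, hence so does `(u₂, v₂)`, which is then left of its `r↓`.
    have hv₂ : v₂ = 0 := le_antisymm (hv.trans hpb₁.2) (hD (hγ₂.1 hp₂)).1.2
    have hpb₂ : ((u₂, v₂) : ℝ × ℝ) ≤ (rDown (u₂, v₂), 0) :=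
      ⟨(hspec _ h2).2 u₂ ⟨γ₂, hγ₂, hp₂, hv₂ ▸ hp₂⟩, hv₂.le⟩
    rw [uIcc_of_le hpb₁] at hq₁
    rw [uIcc_of_le hpb₂] at hq₂
    exact hp₂q.trans_of_le hqb₁ hq₂.2.1 hq₁.2.2

/-- Monotonicity of `r↓`: moving right and down can only increase the rightmost
bottom point reachable. -/
theorem rDown_monotone (m n : ℝ) (hm : 0 ≤ m) (hn : 0 ≤ n)
    (Dε : Set (ℝ × ℝ)) (hD : Dε ⊆ Icc ((0 : ℝ), (0 : ℝ)) (2 * m, n))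
    (rDown : ℝ × ℝ → ℝ)
    (hspec : ∀ p : ℝ × ℝ, (∃ u : ℝ, MutuallyReachable Dε p (u, 0)) →
      MutuallyReachable Dε p (rDown p, 0) ∧
        ∀ u : ℝ, MutuallyReachable Dε p (u, 0) → u ≤ rDown p)
    (hcross : ∀ γ₁ γ₂ : Set (ℝ × ℝ), MonotonicPath Dε γ₁ → MonotonicPath Dε γ₂ →
      ∀ p₁ ∈ γ₁, ∀ p₂ ∈ γ₂, ∀ x₁ x₂ : ℝ, (x₁, (0 : ℝ)) ∈ γ₁ → (x₂, (0 : ℝ)) ∈ γ₂ →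
        p₁.1 ≤ p₂.1 → p₂.2 ≤ p₁.2 → x₂ ≤ x₁ → (γ₁ ∩ γ₂).Nonempty)
    (u₁ v₁ u₂ v₂ : ℝ)
    (h1 : ∃ u : ℝ, MutuallyReachable Dε (u₁, v₁) (u, 0))
    (h2 : ∃ u : ℝ, MutuallyReachable Dε (u₂, v₂) (u, 0))
    (hu : u₁ ≤ u₂) (hv : v₂ ≤ v₁) :
    rDown (u₁, v₁) ≤ rDown (u₂, v₂) :=
  rDown_monotone_general m n Dε hD rDown hspec hcross u₁ v₁ u₂ v₂ h1 h2 hu hv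
end

section
/- (Reachable sets on sides are intervals.) Assume D_ε ∩ D(i,j) is convex for each cell, and g↓ is the set of points of D_ε mutually reachable with the bottom side B via monotonic paths. Then for every cell (i,j), the set g↓ ∩ T(i,j) (bottom-reachable points on the top side of the cell) is a connected subset of T(i,j), i.e., an interval. -/
/-!
A monotonic path is a chain for the product order on `ℝ × ℝ`. Clamping a monotonic path from the
bottom side to `a = (u₁, j)` by `· ⊓ a` therefore keeps it inside itself, and being a continuous
image it stays connected. By convexity of the cell the horizontal segment from `a` to `(u, j)` lies
in `D_ε`, above `a`; glued to the clamped path at `a` it gives a monotonic path from the bottom side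
to `(u, j)`.
-/

open Set

lemma mul_sub_nonneg_iff_le_or_le (p q : ℝ × ℝ) :
    0 ≤ (p.1 - q.1) * (p.2 - q.2) ↔ p ≤ q ∨ q ≤ p := by
  simp only [mul_nonneg_iff, sub_nonneg, sub_nonpos, Prod.le_def]
  tauto

lemma monotonicPath_iff {S γ : Set (ℝ × ℝ)} :
    MonotonicPath S γ ↔ γ ⊆ S ∧ IsConnected γ ∧ IsChain (· ≤ ·) γ := by
  refine and_congr_right fun _ => and_congr_right fun _ => ⟨fun h => ?_, fun h => ?_⟩
  · exact fun p hp q hq _ => (mul_sub_nonneg_iff_le_or_le p q).1 (h p hp q hq)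
  · exact fun p hp q hq => (mul_sub_nonneg_iff_le_or_le p q).2 (h.total hp hq)

lemma MutuallyReachable.left_mem {S : Set (ℝ × ℝ)} {p q : ℝ × ℝ}
    (h : MutuallyReachable S p q) : p ∈ S :=
  let ⟨_, hγ, hp, _⟩ := h
  hγ.1 hp

lemma IsChain.inf_mem {α : Type*} [Lattice α] {γ : Set α} (hγ : IsChain (· ≤ ·) γ) {a b : α}
    (ha : a ∈ γ) (hb : b ∈ γ) : a ⊓ b ∈ γ := by
  rcases hγ.total ha hb with h | h
  · rwa [inf_eq_left.2 h]
  · rwa [inf_eq_right.2 h]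

lemma isChain_segment {𝕜 E : Type*} [Ring 𝕜] [LinearOrder 𝕜] [IsOrderedRing 𝕜]
    [AddCommGroup E] [PartialOrder E] [IsOrderedAddMonoid E] [Module 𝕜 E] [SMulPosMono 𝕜 E]
    {a b : E} (hab : a ≤ b) : IsChain (· ≤ ·) (segment 𝕜 a b) := by
  rw [segment_eq_image_lineMap]
  exact (AffineMap.lineMap_mono hab).isChain_image (isChain_of_trichotomous _)

lemma monotonicPath_segment {S : Set (ℝ × ℝ)} {a b : ℝ × ℝ} (hab : a ≤ b)
    (hS : segment ℝ a b ⊆ S) : MonotonicPath S (segment ℝ a b) :=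
  monotonicPath_iff.2
    ⟨hS, (convex_segment a b).isConnected ⟨a, left_mem_segment ℝ a b⟩, isChain_segment hab⟩

lemma MonotonicPath.image_inf {S γ : Set (ℝ × ℝ)} (hγ : MonotonicPath S γ) {a : ℝ × ℝ}
    (ha : a ∈ γ) : MonotonicPath S ((· ⊓ a) '' γ) := by
  obtain ⟨hS, hconn, hchain⟩ := monotonicPath_iff.1 hγ
  have hcont : Continuous fun p : ℝ × ℝ => p ⊓ a :=
    (continuous_fst.min continuous_const).prodMk (continuous_snd.min continuous_const)
  refine monotonicPath_iff.2 ⟨?_, hconn.image _ hcont.continuousOn, ?_⟩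
  · rintro _ ⟨p, hp, rfl⟩
    exact hS (hchain.inf_mem hp ha)
  · exact Monotone.isChain_image (f := (· ⊓ a)) (fun _ _ h => inf_le_inf_right a h) hchain

lemma MonotonicPath.union {S γ γ' : Set (ℝ × ℝ)} {a : ℝ × ℝ}
    (hγ : MonotonicPath S γ) (hγ' : MonotonicPath S γ') (ha : a ∈ γ) (ha' : a ∈ γ')
    (hle : γ ⊆ Iic a) (hge : γ' ⊆ Ici a) : MonotonicPath S (γ ∪ γ') := by
  obtain ⟨hS, hconn, hchain⟩ := monotonicPath_iff.1 hγ
  obtain ⟨hS', hconn', hchain'⟩ := monotonicPath_iff.1 hγ'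
  refine monotonicPath_iff.2 ⟨union_subset hS hS', hconn.union ⟨a, ha, ha'⟩ hconn', ?_⟩
  exact isChain_union.2 ⟨hchain, hchain', fun x hx y hy _ => Or.inl ((hle hx).trans (hge hy))⟩

lemma MutuallyReachable.extend_segment {S : Set (ℝ × ℝ)} {p a b : ℝ × ℝ}
    (h : MutuallyReachable S a p) (hab : a ≤ b) (hS : segment ℝ a b ⊆ S) :
    MutuallyReachable S b (p ⊓ a) := by
  obtain ⟨γ, hγ, ha, hp⟩ := h
  refine ⟨_, (hγ.image_inf ha).union (monotonicPath_segment hab hS) ⟨a, ha, inf_idem a⟩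
      (left_mem_segment ℝ a b) (image_subset_iff.2 fun p _ => show p ⊓ a ≤ a from inf_le_right)
      ((segment_subset_Icc hab).trans Icc_subset_Ici_self),
    Or.inr (right_mem_segment ℝ a b), Or.inl ⟨p, hp, rfl⟩⟩

theorem gDown_top_side_interval_general (m n : ℕ) (Dε : Set (ℝ × ℝ))
    (hcell : ∀ i j : ℕ, 1 ≤ i → i ≤ 2 * m → 1 ≤ j → j ≤ n →
      Convex ℝ (Dε ∩ Icc (((i : ℝ) - 1), ((j : ℝ) - 1)) ((i : ℝ), (j : ℝ))))
    (gDown : Set (ℝ × ℝ))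
    (hg : gDown = {p : ℝ × ℝ | ∃ u : ℝ, MutuallyReachable Dε p (u, 0)})
    (i j : ℕ) (hi1 : 1 ≤ i) (hi2 : i ≤ 2 * m) (hj1 : 1 ≤ j) (hj2 : j ≤ n) :
    ∀ u₁ u₂ u : ℝ,
      (u₁, (j : ℝ)) ∈ gDown ∩ Icc (((i : ℝ) - 1), (j : ℝ)) ((i : ℝ), (j : ℝ)) →
      (u₂, (j : ℝ)) ∈ gDown ∩ Icc (((i : ℝ) - 1), (j : ℝ)) ((i : ℝ), (j : ℝ)) →
      u₁ ≤ u → u ≤ u₂ →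
      (u, (j : ℝ)) ∈ gDown ∩ Icc (((i : ℝ) - 1), (j : ℝ)) ((i : ℝ), (j : ℝ)) := by
  subst hg
  rintro u₁ u₂ u ⟨⟨w, hreach₁⟩, hu₁_top⟩ ⟨⟨_, hreach₂⟩, hu₂_top⟩ h₁ h₂
  have hj : (0 : ℝ) ≤ j := j.cast_nonneg
  have hconv := hcell i j hi1 hi2 hj1 hj2
  have htop : Icc ((i : ℝ) - 1, (j : ℝ)) (i, j) ⊆ Icc ((i : ℝ) - 1, (j : ℝ) - 1) (i, j) :=
    Icc_subset_Icc_left (Prod.mk_le_mk.2 ⟨le_rfl, by linarith⟩)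
  have hu₁_cell : ((u₁, j) : ℝ × ℝ) ∈ Dε ∩ Icc ((i : ℝ) - 1, (j : ℝ) - 1) (i, j) :=
    ⟨hreach₁.left_mem, htop hu₁_top⟩
  have hu₂_cell : ((u₂, j) : ℝ × ℝ) ∈ Dε ∩ Icc ((i : ℝ) - 1, (j : ℝ) - 1) (i, j) :=
    ⟨hreach₂.left_mem, htop hu₂_top⟩
  have hu_seg : ((u, j) : ℝ × ℝ) ∈ segment ℝ (u₁, (j : ℝ)) (u₂, (j : ℝ)) := by
    rw [← Prod.image_mk_segment_left, segment_eq_Icc (h₁.trans h₂)]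
    exact ⟨u, ⟨h₁, h₂⟩, rfl⟩
  have hu_cell := hconv.segment_subset hu₁_cell hu₂_cell hu_seg
  have hreach := hreach₁.extend_segment (Prod.mk_le_mk.2 ⟨h₁, le_rfl⟩)
    ((hconv.segment_subset hu₁_cell hu_cell).trans inter_subset_left)
  have hbottom : ((w, 0) ⊓ (u₁, j) : ℝ × ℝ) = (w ⊓ u₁, 0) := Prod.ext rfl (inf_eq_left.2 hj)
  refine ⟨⟨w ⊓ u₁, hbottom ▸ hreach⟩, ?_⟩
  exact ⟨⟨hu₁_top.1.1.trans h₁, le_rfl⟩, ⟨h₂.trans hu₂_top.2.1, le_rfl⟩⟩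

/-- The bottom-reachable points on the top side of a cell form an interval. -/
theorem gDown_top_side_interval (m n : ℕ) (Dε : Set (ℝ × ℝ))
    (hD : Dε ⊆ Icc ((0 : ℝ), (0 : ℝ)) (2 * (m : ℝ), (n : ℝ)))
    (hcell : ∀ i j : ℕ, 1 ≤ i → i ≤ 2 * m → 1 ≤ j → j ≤ n →
      Convex ℝ (Dε ∩ Icc (((i : ℝ) - 1), ((j : ℝ) - 1)) ((i : ℝ), (j : ℝ))))
    (gDown : Set (ℝ × ℝ))
    (hg : gDown = {p : ℝ × ℝ | ∃ u : ℝ, MutuallyReachable Dε p (u, 0)})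
    (i j : ℕ) (hi1 : 1 ≤ i) (hi2 : i ≤ 2 * m) (hj1 : 1 ≤ j) (hj2 : j ≤ n) :
    ∀ u₁ u₂ u : ℝ,
      (u₁, (j : ℝ)) ∈ gDown ∩ Icc (((i : ℝ) - 1), (j : ℝ)) ((i : ℝ), (j : ℝ)) →
      (u₂, (j : ℝ)) ∈ gDown ∩ Icc (((i : ℝ) - 1), (j : ℝ)) ((i : ℝ), (j : ℝ)) →
      u₁ ≤ u → u ≤ u₂ →
      (u, (j : ℝ)) ∈ gDown ∩ Icc (((i : ℝ) - 1), (j : ℝ)) ((i : ℝ), (j : ℝ)) :=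
  gDown_top_side_interval_general m n Dε hcell gDown hg i j hi1 hi2 hj1 hj2
end
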